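/- arXiv:0809.4650 — 2 statements merged into one kernel-verified Lean document; each statement's English description precedes it below -/
import Mathlib

section
/- Let I = {i₁ < … < i_r} ⊆ {1,…,m}, J = {j₁ < … < j_r} ⊆ {1,…,n}, and let k ∈ {1,…,m}, l ∈ {1,…,n}. Suppose k satisfies one of: k ∈ I, k < i₁, or k > i_r, and set ε₁ = 0, 1, −1 in these respective cases; suppose l satisfies one of: l ∈ J, l < j₁, or l > j_r, and set ε₂ = 0, 1, −1 in these respective cases. If |ε₁ + ε₂| ≤ 1, then in R_{m,n} one has the identity {x_{kl}, Δ_{I,J}} = (ε₁ + ε₂)·x_{kl}·Δ_{I,J}. -/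
open MvPolynomial

/-- The quadratic Poisson bracket on the polynomial algebra of the matrix affine
Poisson space `M_{m,n}`. -/
noncomputable def pois {m n : ℕ} (f g : MvPolynomial (Fin m × Fin n) ℂ) :
    MvPolynomial (Fin m × Fin n) ℂ :=
  ∑ i : Fin m, ∑ k : Fin m, ∑ j : Fin n, ∑ l : Fin n,
    (((k : ℤ) - (i : ℤ)).sign + ((l : ℤ) - (j : ℤ)).sign) •
      (X (i, l) * X (k, j) * pderiv (i, j) f * pderiv (k, l) g)

/-- The minor `Δ_{I,J}` (equal to `0` by convention if `|I| ≠ |J|`). -/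
noncomputable def Delta {m n : ℕ} (I : Finset (Fin m)) (J : Finset (Fin n)) :
    MvPolynomial (Fin m × Fin n) ℂ :=
  if h : J.card = I.card then
    Matrix.det (Matrix.of fun a b : Fin I.card =>
      X ((I.orderIsoOfFin rfl a).1, (J.orderIsoOfFin h b).1))
  else 0

/-- Evaluation of a polynomial at a matrix. -/
noncomputable def evalM {m n : ℕ} (Y : Matrix (Fin m) (Fin n) ℂ)
    (f : MvPolynomial (Fin m × Fin n) ℂ) : ℂ :=
  eval (fun p => Y p.1 p.2) f

/-!
The bracket `{x_kl, ·}` is a derivation, the sum of a row part `x_ab ↦ sign(a−k) x_kb x_al` and a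
column part `x_ab ↦ sign(b−l) x_kb x_al`. Applied to `Δ_{I,J}`, the row part replaces each row
`a ∈ I` in turn by row `k` (restricted to `J`), with weight `sign(a−k) x_al`. If `k ∈ I` every term
vanishes (a repeated row, or a zero sign); otherwise all the signs equal `ε₁`. So the row part
gives `ε₁ T` and, symmetrically, the column part gives `ε₂ T'`, where `T` and `T'` are the row and
column expansions of `uᵀ adj(Δ) v` (`u` is row `k` restricted to `J`, `v` column `l` restricted
to `I`), hence equal. Finally `T = x_kl Δ_{I,J}` when `k ∈ I` or `l ∈ J`, and in the remaining
case `ε₁, ε₂ = ±1` and `|ε₁ + ε₂| ≤ 1` force `ε₁ + ε₂ = 0`.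
-/

namespace Derivation

theorem map_finset_prod {R A M : Type*} [CommSemiring R] [CommSemiring A] [Algebra R A]
    [AddCommMonoid M] [Module A M] [Module R M] (D : Derivation R A M) {ι : Type*}
    [DecidableEq ι] (s : Finset ι) (f : ι → A) : D (∏ i ∈ s, f i) = ∑ i ∈ s, (∏ j ∈ s.erase i, f j) • D (f i) := by
  induction s using Finset.induction_on with
  | empty => simp
  | insert a s ha ih =>
    rw [Finset.prod_insert ha, leibniz, ih, Finset.sum_insert ha, Finset.erase_insert ha,
      Finset.smul_sum, add_comm]
    congr 1
    refine Finset.sum_congr rfl fun i hi => ?_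
    rw [Finset.erase_insert_of_ne (ne_of_mem_of_not_mem hi ha).symm,
      Finset.prod_insert fun h => ha (Finset.mem_of_mem_erase h), smul_smul]

variable {R A : Type*} [CommRing R] [CommRing A] [Algebra R A] {ι : Type*} [Fintype ι]
  [DecidableEq ι]

theorem map_det_eq_sum_det_updateCol (D : Derivation R A A) (M : Matrix ι ι A) :
    D M.det = ∑ i, (M.updateCol i fun p => D (M p i)).det := by
  simp only [Matrix.det_apply, map_sum, Units.smul_def, map_zsmul, map_finset_prod, smul_eq_mul]
  rw [Finset.sum_comm]
  refine Finset.sum_congr rfl fun σ _ => ?_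
  rw [Finset.smul_sum]
  refine Finset.sum_congr rfl fun i _ => ?_
  rw [← Finset.mul_prod_erase _ _ (Finset.mem_univ i), Matrix.updateCol_self, mul_comm]
  congr 2
  exact Finset.prod_congr rfl fun j hj => (Matrix.updateCol_ne (Finset.ne_of_mem_erase hj)).symm

theorem map_det_eq_sum_det_updateRow (D : Derivation R A A) (M : Matrix ι ι A) :
    D M.det = ∑ i, (M.updateRow i fun q => D (M i q)).det := by
  rw [← Matrix.det_transpose, map_det_eq_sum_det_updateCol]
  simp only [Matrix.transpose_apply, Matrix.updateCol_transpose, Matrix.det_transpose]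

end Derivation

theorem MvPolynomial.mkDerivation_eq_sum_pderiv {R σ : Type*} [CommSemiring R] [Fintype σ]
    [DecidableEq σ] (f : σ → MvPolynomial σ R) (g : MvPolynomial σ R) :
    mkDerivation R f g = ∑ i, f i * pderiv i g := by
  have hsum : ∀ h, (∑ i, f i • pderiv i : Derivation R _ _) h = ∑ i, f i * pderiv i h := by
    intro h
    rw [← Derivation.coeFnAddMonoidHom_apply, map_sum, Finset.sum_apply]
    rfl
  have hf : mkDerivation R f = ∑ i, f i • pderiv i :=
    derivation_ext fun j => by simp [hsum, pderiv_X, Pi.single_apply]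
  rw [hf, hsum]

namespace Matrix

variable {R : Type*} [CommRing R] {ι : Type*} [Fintype ι] [DecidableEq ι]

theorem sum_mul_det_updateRow_eq_sum_mul_det_updateCol (A : Matrix ι ι R) (u v : ι → R) :
    ∑ p, v p * (A.updateRow p u).det = ∑ q, u q * (A.updateCol q v).det := by
  simp only [← cramer_transpose_apply, ← cramer_apply, cramer_eq_adjugate_mulVec,
    ← adjugate_transpose]
  change v ⬝ᵥ _ = u ⬝ᵥ _
  rw [dotProduct_mulVec, vecMul_transpose, dotProduct_comm]

theorem sum_mul_det_updateRow_self (A : Matrix ι ι R) (v : ι → R) (p₀ : ι) :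
    ∑ p, v p * (A.updateRow p (A p₀)).det = v p₀ * A.det := by
  rw [Finset.sum_eq_single p₀ (fun p _ hp => by rw [det_updateRow_eq_zero hp.symm, mul_zero])
    (by simp), updateRow_eq_self]

theorem sum_mul_det_updateCol_self (A : Matrix ι ι R) (u : ι → R) (q₀ : ι) :
    ∑ q, u q * (A.updateCol q fun p => A p q₀).det = u q₀ * A.det := by
  rw [Finset.sum_eq_single q₀ (fun q _ hq => by rw [det_updateCol_eq_zero hq.symm, mul_zero])
    (by simp), updateCol_eq_self]

end Matrix

/-- The paper's condition "`sign(S − k)` is defined and equals `ε`". -/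
def IsSideSign {m : ℕ} (S : Set (Fin m)) (k : Fin m) (ε : ℤ) : Prop :=
  (k ∈ S ∧ ε = 0) ∨ ((∀ i ∈ S, k < i) ∧ ε = 1) ∨ ((∀ i ∈ S, i < k) ∧ ε = -1)

namespace IsSideSign

variable {m : ℕ} {S : Set (Fin m)} {k : Fin m} {ε : ℤ}

theorem eq_zero (h : IsSideSign S k ε) (hk : k ∈ S) : ε = 0 := by
  rcases h with ⟨-, rfl⟩ | ⟨hlt, -⟩ | ⟨hgt, -⟩
  · rfl
  · exact absurd (hlt k hk) (lt_irrefl k)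
  · exact absurd (hgt k hk) (lt_irrefl k)

theorem sign_sub_eq (h : IsSideSign S k ε) (hk : k ∉ S) {i : Fin m} (hi : i ∈ S) :
    ((i : ℤ) - k).sign = ε := by
  rcases h with ⟨hk', -⟩ | ⟨hlt, rfl⟩ | ⟨hgt, rfl⟩
  · exact absurd hk' hk
  · exact Int.sign_eq_one_of_pos (by have := hlt i hi; omega)
  · exact Int.sign_eq_neg_one_of_neg (by have := hgt i hi; omega)

theorem add_eq_zero {n : ℕ} {T : Set (Fin n)} {l : Fin n} {ε' : ℤ} (h : IsSideSign S k ε)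
    (h' : IsSideSign T l ε') (hk : k ∉ S) (hl : l ∉ T) (hε : |ε + ε'| ≤ 1) : ε + ε' = 0 := by
  rcases h with ⟨hk', -⟩ | ⟨-, rfl⟩ | ⟨-, rfl⟩ <;> rcases h' with ⟨hl', -⟩ | ⟨-, rfl⟩ | ⟨-, rfl⟩ <;>
    first | contradiction | norm_num at hε ⊢

end IsSideSign

section Poisson

variable {m n : ℕ}

noncomputable def rowCoeff (k : Fin m) (l : Fin n) (v : Fin m × Fin n) :
    MvPolynomial (Fin m × Fin n) ℂ :=
  ((v.1 : ℤ) - k).sign • (X (k, v.2) * X (v.1, l))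

noncomputable def colCoeff (k : Fin m) (l : Fin n) (v : Fin m × Fin n) :
    MvPolynomial (Fin m × Fin n) ℂ :=
  ((v.2 : ℤ) - l).sign • (X (k, v.2) * X (v.1, l))

theorem pois_X_eq_add (k : Fin m) (l : Fin n) (g : MvPolynomial (Fin m × Fin n) ℂ) :
    pois (X (k, l)) g = mkDerivation ℂ (rowCoeff k l) g + mkDerivation ℂ (colCoeff k l) g := by
  simp only [mkDerivation_eq_sum_pderiv, rowCoeff, colCoeff, ← Finset.sum_add_distrib,
    smul_mul_assoc, ← add_smul, Fintype.sum_prod_type]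
  simp [pois, pderiv_X, Pi.single_apply, Prod.ext_iff, ite_and, Finset.sum_ite_irrel]

variable {ι : Type*} [Fintype ι] [DecidableEq ι] (ρ : ι → Fin m) (γ : ι → Fin n)

noncomputable def minorMatrix : Matrix ι ι (MvPolynomial (Fin m × Fin n) ℂ) :=
  Matrix.of fun a b => X (ρ a, γ b)

theorem mkDerivation_rowCoeff_det {k : Fin m} {ε : ℤ} (hk : IsSideSign (Set.range ρ) k ε)
    (l : Fin n) :
    mkDerivation ℂ (rowCoeff k l) (minorMatrix ρ γ).det =
      ε • ∑ p, X (ρ p, l) * ((minorMatrix ρ γ).updateRow p fun q => X (k, γ q)).det := by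
  rw [Derivation.map_det_eq_sum_det_updateRow, Finset.smul_sum]
  refine Finset.sum_congr rfl fun p _ => ?_
  have hrow : (fun q => mkDerivation ℂ (rowCoeff k l) (minorMatrix ρ γ p q)) =
      (((ρ p : ℤ) - k).sign • (X (ρ p, l) : MvPolynomial _ ℂ)) • fun q => X (k, γ q) := by
    ext q
    simp only [minorMatrix, Matrix.of_apply, mkDerivation_X, rowCoeff, Pi.smul_apply, smul_eq_mul,
      smul_mul_assoc, mul_comm (X (ρ p, l))]
  rw [hrow, Matrix.det_updateRow_smul, smul_mul_assoc]
  by_cases hkρ : k ∈ Set.range ρ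
  · obtain ⟨p₀, rfl⟩ := hkρ
    rw [hk.eq_zero ⟨p₀, rfl⟩, zero_smul]
    rcases eq_or_ne p p₀ with rfl | hp
    · rw [sub_self, Int.sign_zero, zero_smul]
    · exact smul_eq_zero_of_right _ (mul_eq_zero_of_right _ (Matrix.det_updateRow_eq_zero hp.symm))
  · rw [hk.sign_sub_eq hkρ ⟨p, rfl⟩]

theorem mkDerivation_colCoeff_det (k : Fin m) {l : Fin n} {ε : ℤ}
    (hl : IsSideSign (Set.range γ) l ε) :
    mkDerivation ℂ (colCoeff k l) (minorMatrix ρ γ).det =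
      ε • ∑ q, X (k, γ q) * ((minorMatrix ρ γ).updateCol q fun p => X (ρ p, l)).det := by
  rw [Derivation.map_det_eq_sum_det_updateCol, Finset.smul_sum]
  refine Finset.sum_congr rfl fun q _ => ?_
  have hcol : (fun p => mkDerivation ℂ (colCoeff k l) (minorMatrix ρ γ p q)) =
      (((γ q : ℤ) - l).sign • (X (k, γ q) : MvPolynomial _ ℂ)) • fun p => X (ρ p, l) := by
    ext p
    simp only [minorMatrix, Matrix.of_apply, mkDerivation_X, colCoeff, Pi.smul_apply, smul_eq_mul,
      smul_mul_assoc]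
  rw [hcol, Matrix.det_updateCol_smul, smul_mul_assoc]
  by_cases hlγ : l ∈ Set.range γ
  · obtain ⟨q₀, rfl⟩ := hlγ
    rw [hl.eq_zero ⟨q₀, rfl⟩, zero_smul]
    rcases eq_or_ne q q₀ with rfl | hq
    · rw [sub_self, Int.sign_zero, zero_smul]
    · exact smul_eq_zero_of_right _ (mul_eq_zero_of_right _ (Matrix.det_updateCol_eq_zero hq.symm))
  · rw [hl.sign_sub_eq hlγ ⟨q, rfl⟩]

theorem pois_X_det_minorMatrix {k : Fin m} {l : Fin n} {ε₁ ε₂ : ℤ}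
    (hk : IsSideSign (Set.range ρ) k ε₁) (hl : IsSideSign (Set.range γ) l ε₂)
    (hε : |ε₁ + ε₂| ≤ 1) :
    pois (X (k, l)) (minorMatrix ρ γ).det = (ε₁ + ε₂) • (X (k, l) * (minorMatrix ρ γ).det) := by
  rw [pois_X_eq_add, mkDerivation_rowCoeff_det ρ γ hk, mkDerivation_colCoeff_det ρ γ k hl,
    ← Matrix.sum_mul_det_updateRow_eq_sum_mul_det_updateCol, ← add_smul]
  by_cases hkρ : k ∈ Set.range ρ
  · obtain ⟨p₀, rfl⟩ := hkρ
    exact congrArg _ (Matrix.sum_mul_det_updateRow_self _ _ p₀)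
  by_cases hlγ : l ∈ Set.range γ
  · obtain ⟨q₀, rfl⟩ := hlγ
    rw [Matrix.sum_mul_det_updateRow_eq_sum_mul_det_updateCol]
    exact congrArg _ (Matrix.sum_mul_det_updateCol_self _ _ q₀)
  rw [hk.add_eq_zero hl hkρ hlγ hε, zero_smul, zero_smul]

end Poisson

/-- **[GSV, Lemma 3.2].** If `sign(I−k)` and `sign(J−l)` are defined, with values
`ε₁`, `ε₂`, and `|ε₁ + ε₂| ≤ 1`, then `{x_{kl}, Δ_{I,J}} = (ε₁+ε₂)·x_{kl}·Δ_{I,J}`. -/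
theorem bracket_entry_minor_eigen (m n : ℕ) (r : ℕ)
    (I : Finset (Fin m)) (J : Finset (Fin n))
    (hI : I.card = r) (hJ : J.card = r)
    (k : Fin m) (l : Fin n) (ε₁ ε₂ : ℤ)
    (hk : (k ∈ I ∧ ε₁ = 0) ∨ ((∀ i ∈ I, k < i) ∧ ε₁ = 1) ∨ ((∀ i ∈ I, i < k) ∧ ε₁ = -1))
    (hl : (l ∈ J ∧ ε₂ = 0) ∨ ((∀ j ∈ J, l < j) ∧ ε₂ = 1) ∨ ((∀ j ∈ J, j < l) ∧ ε₂ = -1))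
    (hε : |ε₁ + ε₂| ≤ 1) :
    pois (X (k, l)) (Delta I J) = (ε₁ + ε₂) • (X (k, l) * Delta I J) := by
  subst hI
  have hΔ : Delta I J = (minorMatrix (I.orderEmbOfFin rfl) (J.orderEmbOfFin hJ)).det := by
    simp [Delta, hJ, minorMatrix]
  rw [hΔ]
  refine pois_X_det_minorMatrix _ _ ?_ ?_ hε
  · rwa [Finset.range_orderEmbOfFin]
  · rwa [Finset.range_orderEmbOfFin]
end

section
/- The fraction field F_n is generated as a field extension of ℂ by the set {Δ_{n;k}/Δ'_{n;n−k} : 1 ≤ k ≤ n−1} ∪ {Δ_n} ∪ {x_{ij} : 2 ≤ i ≤ n, 1 ≤ j ≤ n}; that is, the subfield of F_n generated by these n + n(n−1) elements (together with ℂ) is all of F_n. -/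
open MvPolynomial

/-- The coordinate ring `R_n = ℂ[x_{ij}]` of `M_n`. -/
abbrev Rn (n : ℕ) := MvPolynomial (Fin n × Fin n) ℂ

/-- The field of rational functions `F_n = ℂ(M_n)`. -/
abbrev Fn (n : ℕ) := FractionRing (Rn n)

/-- The interval `[a,b]` (in 1-based indexing) inside `{1,…,n}`, as a finset of `Fin n`. -/
def iv (n a b : ℕ) : Finset (Fin n) :=
  Finset.univ.filter fun i => a ≤ (i : ℕ) + 1 ∧ (i : ℕ) + 1 ≤ b

/-- `Δ_{l;k}`: the upper-right `k×k` minor of the principal `l×l` submatrix. -/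
noncomputable def Dul (n l k : ℕ) : Rn n := Delta (iv n 1 k) (iv n (l - k + 1) l)

/-- `Δ'_{l;k}`: the lower-left `k×k` minor of the principal `l×l` submatrix. -/
noncomputable def Dll (n l k : ℕ) : Rn n := Delta (iv n (l - k + 1) l) (iv n 1 k)

/-- `Δ_l`: the principal `l×l` minor. -/
noncomputable def Dpr (n l : ℕ) : Rn n := Delta (iv n 1 l) (iv n 1 l)

/-- The extension of the quadratic Poisson bracket to the field of rational functions,
determined by `{P/Q, S/T} = ({P,S}QT − {P,T}QS − {Q,S}PT + {Q,T}PS)/(Q²T²)`. -/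
noncomputable def poisF (n : ℕ) (f g : Fn n) : Fn n :=
  let φ := algebraMap (Rn n) (Fn n)
  let P := (IsLocalization.sec (nonZeroDivisors (Rn n)) f).1
  let Q := ((IsLocalization.sec (nonZeroDivisors (Rn n)) f).2 : Rn n)
  let S := (IsLocalization.sec (nonZeroDivisors (Rn n)) g).1
  let T := ((IsLocalization.sec (nonZeroDivisors (Rn n)) g).2 : Rn n)
  (φ (pois P S) * φ Q * φ T - φ (pois P T) * φ Q * φ S
    - φ (pois Q S) * φ P * φ T + φ (pois Q T) * φ P * φ S)
    / (φ Q ^ 2 * φ T ^ 2)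

/-!
The entries `x_{ij}` with `i ≥ 2` lie in the generated subfield `K`. Every
`Δ'_{n;n-k}` is a nonzero minor of those rows, so `Δ_{n;k} ∈ K` for `k < n`, and
`Δ_{n;n} = Δ_n`. Expanding `Δ_{n;k}` along its first row writes it as
`x_{1,n-k+1}` times a nonzero minor of the lower rows, plus first-row entries further
to the right times further such minors. Downward induction on the column therefore puts
the whole first row in `K`, hence all of `R_n` and its fraction field.
-/

open Matrix

section

variable {α β R : Type*} [CommRing R] [Nontrivial R]

theorem det_submatrix_mvPolynomialX_ne_zero {m : Type*} [Fintype m]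
    [DecidableEq m] {r : m → α} {c : m → β} (hr : r.Injective) (hc : c.Injective) :
    ((mvPolynomialX α β R).submatrix r c).det ≠ 0 := by
  have : (mvPolynomialX α β R).submatrix r c =
      (rename (Prod.map r c) : MvPolynomial (m × m) R →ₐ[R] _).mapMatrix
        (mvPolynomialX m m R) := by
    ext a b; simp
  rw [this, ← AlgHom.map_det, Ne, map_eq_zero_iff _ (rename_injective _ (hr.prodMap hc))]
  exact det_mvPolynomialX_ne_zero m R

theorem det_mem_of_forall_mem {L S : Type*} [CommRing L] [SetLike S L] [SubringClass S L]
    (K : S) {m : Type*} [Fintype m] [DecidableEq m] {M : Matrix m m L}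
    (hM : ∀ i j, M i j ∈ K) : M.det ∈ K := by
  rw [det_apply']
  exact sum_mem fun σ _ => mul_mem (intCast_mem K _) (prod_mem fun i _ => hM _ _)

theorem map_X_mem_of_map_det_mem {L S : Type*} [Field L] [SetLike S L] [SubfieldClass S L]
    (K : S) {φ : MvPolynomial (α × β) R →+* L} (hφ : Function.Injective φ) {m : ℕ}
    {r : Fin (m + 1) → α} {c : Fin (m + 1) → β} (hr : r.Injective) (hc : c.Injective)
    (hrows : ∀ (a : Fin m) t, φ (X (r a.succ, c t)) ∈ K)
    (hrow : ∀ t : Fin m, φ (X (r 0, c t.succ)) ∈ K)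
    (hdet : φ ((mvPolynomialX α β R).submatrix r c).det ∈ K) :
    φ (X (r 0, c 0)) ∈ K := by
  set A := (mvPolynomialX α β R).submatrix r c
  have hminor : ∀ t : Fin (m + 1), φ (A.submatrix Fin.succ t.succAbove).det ∈ K := fun t => by
    rw [RingHom.map_det]
    exact det_mem_of_forall_mem K fun a b => hrows a _
  have hcofactor : φ (A.submatrix Fin.succ (Fin.succAbove 0)).det ≠ 0 := by
    rw [map_ne_zero_iff φ hφ, submatrix_submatrix]
    exact det_submatrix_mvPolynomialX_ne_zero (hr.comp (Fin.succ_injective _))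
      (hc.comp Fin.succAbove_right_injective)
  have hexpand : φ A.det = φ (X (r 0, c 0)) * φ (A.submatrix Fin.succ (Fin.succAbove 0)).det
      + ∑ t : Fin m, (-1) ^ (t.succ : ℕ) * φ (X (r 0, c t.succ))
          * φ (A.submatrix Fin.succ t.succ.succAbove).det := by
    rw [det_succ_row_zero, Fin.sum_univ_succ, map_add, map_sum]
    simp [A]
  have hprod : φ (X (r 0, c 0)) * φ (A.submatrix Fin.succ (Fin.succAbove 0)).det ∈ K := by
    rw [eq_sub_of_add_eq hexpand.symm]
    exact sub_mem hdet (sum_mem fun t _ =>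
      mul_mem (mul_mem (pow_mem (neg_mem (one_mem K)) _) (hrow t)) (hminor _))
  simpa only [mul_div_cancel_right₀ _ hcofactor] using div_mem hprod (hminor 0)

end

theorem IntermediateField.eq_top_of_algebraMap_X_mem {k σ : Type*} [Field k]
    (K : IntermediateField k (FractionRing (MvPolynomial σ k)))
    (hX : ∀ i, algebraMap (MvPolynomial σ k) _ (X i) ∈ K) : K = ⊤ := by
  have hpoly (P : MvPolynomial σ k) : algebraMap (MvPolynomial σ k) _ P ∈ K := by
    induction P using MvPolynomial.induction_on with
    | C a =>
      rw [← algebraMap_eq, ← IsScalarTower.algebraMap_apply]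
      exact K.algebraMap_mem a
    | add p q hp hq => rw [map_add]; exact add_mem hp hq
    | mul_X p i hp => rw [map_mul]; exact mul_mem hp (hX i)
  refine eq_top_iff.2 fun x _ => ?_
  obtain ⟨P, Q, -, rfl⟩ := IsFractionRing.div_surjective (A := MvPolynomial σ k) x
  exact div_mem (hpoly P) (hpoly Q)

theorem card_iv {n a b : ℕ} (ha : 1 ≤ a) (hb : b ≤ n) : (iv n a b).card = b + 1 - a := by
  have : (iv n a b).map Fin.valEmbedding = Finset.Ico (a - 1) b := by
    ext i
    simp only [iv, Finset.mem_map, Finset.mem_filter, Finset.mem_univ, true_and,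
      Fin.valEmbedding_apply, Finset.mem_Ico]
    exact ⟨fun ⟨j, hj, hji⟩ => by omega,
      fun hi => ⟨⟨i, by omega⟩, by simp only; omega, rfl⟩⟩
  rw [← Finset.card_map Fin.valEmbedding, this, Nat.card_Ico]
  omega

theorem val_orderEmbOfFin_iv_zero {n a b k : ℕ} (ha : 1 ≤ a) (hab : a ≤ b) (hb : b ≤ n)
    (h : (iv n a b).card = k + 1) : ((iv n a b).orderEmbOfFin h 0 : ℕ) = a - 1 := by
  have hmem : (⟨a - 1, by omega⟩ : Fin n) ∈ iv n a b := by
    simp only [iv, Finset.mem_filter, Finset.mem_univ, true_and]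
    omega
  have hle : (⟨a - 1, by omega⟩ : Fin n) ≤ (iv n a b).min' ⟨_, hmem⟩ :=
    (Finset.le_min'_iff _ _).2 fun i hi => by
      simp only [iv, Finset.mem_filter, Finset.mem_univ, true_and] at hi
      exact Fin.le_def.2 (by simp only; omega)
  rw [← Fin.mk_zero, Finset.orderEmbOfFin_zero h k.succ_pos]
  exact congrArg Fin.val (le_antisymm (Finset.min'_le _ _ hmem) hle)

theorem Dul_self (n : ℕ) : Dul n n n = Dpr n n := by
  rw [Dul, Dpr, Nat.sub_self]

theorem Delta_eq_det_submatrix {m n k : ℕ} {I : Finset (Fin m)} {J : Finset (Fin n)}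
    (hI : I.card = k) (hJ : J.card = k) :
    Delta I J =
      ((mvPolynomialX _ _ ℂ).submatrix (I.orderEmbOfFin hI) (J.orderEmbOfFin hJ)).det := by
  subst hI
  rw [Delta, dif_pos hJ]
  rfl

theorem Delta_ne_zero {m n : ℕ} {I : Finset (Fin m)} {J : Finset (Fin n)}
    (h : J.card = I.card) : Delta I J ≠ 0 := by
  rw [Delta_eq_det_submatrix rfl h]
  exact det_submatrix_mvPolynomialX_ne_zero (Finset.orderEmbOfFin _ _).injective
    (Finset.orderEmbOfFin _ _).injective

theorem map_Delta_mem {m n : ℕ} {L S : Type*} [CommRing L] [SetLike S L] [SubringClass S L]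
    (K : S) (φ : MvPolynomial (Fin m × Fin n) ℂ →+* L) {I : Finset (Fin m)}
    (J : Finset (Fin n))
    (hI : ∀ i ∈ I, ∀ j, φ (X (i, j)) ∈ K) : φ (Delta I J) ∈ K := by
  by_cases h : J.card = I.card
  · rw [Delta_eq_det_submatrix rfl h, RingHom.map_det]
    exact det_mem_of_forall_mem K fun a b => hI _ (Finset.orderEmbOfFin_mem _ _ a) _
  · rw [Delta, dif_neg h, map_zero]
    exact zero_mem K

section

variable {n : ℕ} (K : IntermediateField ℂ (Fn n))

theorem algebraMap_Dul_mem
    (hlow : ∀ i j : Fin n, 1 ≤ (i : ℕ) → algebraMap (Rn n) (Fn n) (X (i, j)) ∈ K)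
    (hDpr : algebraMap (Rn n) (Fn n) (Dpr n n) ∈ K)
    (hratio : ∀ k, 1 ≤ k → k ≤ n - 1 →
      algebraMap (Rn n) (Fn n) (Dul n n k) / algebraMap (Rn n) (Fn n) (Dll n n (n - k)) ∈ K)
    {k : ℕ} (hk : 1 ≤ k) (hkn : k ≤ n) : algebraMap (Rn n) (Fn n) (Dul n n k) ∈ K := by
  obtain rfl | hlt := hkn.eq_or_lt
  · rwa [Dul_self]
  have hDll : algebraMap (Rn n) (Fn n) (Dll n n (n - k)) ∈ K := by
    refine map_Delta_mem K _ _ fun i hi j => hlow i j ?_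
    simp only [iv, Finset.mem_filter] at hi
    omega
  have hDll_ne : algebraMap (Rn n) (Fn n) (Dll n n (n - k)) ≠ 0 := by
    rw [map_ne_zero_iff _ (IsFractionRing.injective (Rn n) (Fn n))]
    refine Delta_ne_zero ?_
    rw [card_iv le_rfl (by omega), card_iv (by omega) le_rfl]
    omega
  rw [← div_mul_cancel₀ (algebraMap (Rn n) (Fn n) (Dul n n k)) hDll_ne]
  exact mul_mem (hratio k hk (by omega)) hDll

theorem algebraMap_X_mem_of_val_eq_zero
    (hlow : ∀ i j : Fin n, 1 ≤ (i : ℕ) → algebraMap (Rn n) (Fn n) (X (i, j)) ∈ K)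
    (hDul : ∀ k, 1 ≤ k → k ≤ n → algebraMap (Rn n) (Fn n) (Dul n n k) ∈ K)
    {i₀ : Fin n} (hi₀ : (i₀ : ℕ) = 0) (j : Fin n) :
    algebraMap (Rn n) (Fn n) (X (i₀, j)) ∈ K := by
  induction j using WellFoundedGT.induction with
  | _ j ih =>
    -- `Δ_{n;n-j}` has rows `1, …, n-j` and columns `j+1, …, n` (1-based), so its top-left
    -- entry is `x_{1,j+1}` and the rest of its first row lies to the right of column `j+1`.
    obtain ⟨m, hm⟩ : ∃ m, n - j = m + 1 := ⟨n - j - 1, by omega⟩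
    have hI : (iv n 1 (m + 1)).card = m + 1 := by rw [card_iv le_rfl (by omega)]; rfl
    have hJ : (iv n (n - (m + 1) + 1) n).card = m + 1 := by rw [card_iv (by omega) le_rfl]; omega
    set r := (iv n 1 (m + 1)).orderEmbOfFin hI
    set c := (iv n (n - (m + 1) + 1) n).orderEmbOfFin hJ
    have hr0 : r 0 = i₀ := Fin.ext <| by
      rw [val_orderEmbOfFin_iv_zero le_rfl (by omega) (by omega), hi₀]
    have hc0 : c 0 = j := Fin.ext <| by
      rw [val_orderEmbOfFin_iv_zero (by omega) (by omega) le_rfl]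
      omega
    have hx := map_X_mem_of_map_det_mem K (IsFractionRing.injective (Rn n) (Fn n))
      r.injective c.injective
      (fun a t => hlow _ _ (by have := r.strictMono (Fin.succ_pos a); rw [hr0] at this; omega))
      (fun t => by rw [hr0]; exact ih _ (hc0 ▸ c.strictMono (Fin.succ_pos t)))
      (by rw [← Delta_eq_det_submatrix]; exact hDul _ le_add_self (by omega))
    rwa [hr0, hc0] at hx

end

theorem Fn_generated_by_center_and_lower_rows_general (n : ℕ) :
    IntermediateField.adjoin ℂ
        (({algebraMap (Rn n) (Fn n) (Dpr n n)} ∪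
          {g : Fn n | ∃ k, 1 ≤ k ∧ k ≤ n - 1 ∧
            g = algebraMap (Rn n) (Fn n) (Dul n n k) /
                algebraMap (Rn n) (Fn n) (Dll n n (n - k))} ∪
          {g : Fn n | ∃ i j : Fin n, 1 ≤ (i : ℕ) ∧
            g = algebraMap (Rn n) (Fn n) (X (i, j))}) : Set (Fn n)) = ⊤ := by
  set K := IntermediateField.adjoin ℂ (_ : Set (Fn n))
  have hlow : ∀ i j : Fin n, 1 ≤ (i : ℕ) → algebraMap (Rn n) (Fn n) (X (i, j)) ∈ K :=
    fun i j hi => IntermediateField.subset_adjoin _ _ (Or.inr ⟨i, j, hi, rfl⟩)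
  have hDul : ∀ k, 1 ≤ k → k ≤ n → algebraMap (Rn n) (Fn n) (Dul n n k) ∈ K :=
    fun k => algebraMap_Dul_mem K hlow
      (IntermediateField.subset_adjoin _ _ (Or.inl (Or.inl rfl)))
      (fun l hl hln => IntermediateField.subset_adjoin _ _ (Or.inl (Or.inr ⟨l, hl, hln, rfl⟩)))
  refine K.eq_top_of_algebraMap_X_mem fun ⟨i, j⟩ => ?_
  rcases Nat.eq_zero_or_pos i with hi | hi
  · exact algebraMap_X_mem_of_val_eq_zero K hlow hDul hi j
  · exact hlow i j hi

/-- **Generation of `ℂ(Mₙ)`:** the field `Fₙ` is generated over `ℂ` by the ratios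
`Δ_{n;k}/Δ'_{n;n−k}` (`1 ≤ k ≤ n−1`), the determinant `Δₙ`, and the variables
`x_{ij}` with `2 ≤ i ≤ n`, `1 ≤ j ≤ n`. -/
theorem Fn_generated_by_center_and_lower_rows (n : ℕ) (hn : 0 < n) :
    IntermediateField.adjoin ℂ
        (({algebraMap (Rn n) (Fn n) (Dpr n n)} ∪
          {g : Fn n | ∃ k, 1 ≤ k ∧ k ≤ n - 1 ∧
            g = algebraMap (Rn n) (Fn n) (Dul n n k) /
                algebraMap (Rn n) (Fn n) (Dll n n (n - k))} ∪
          {g : Fn n | ∃ i j : Fin n, 1 ≤ (i : ℕ) ∧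
            g = algebraMap (Rn n) (Fn n) (X (i, j))}) : Set (Fn n)) = ⊤ :=
  Fn_generated_by_center_and_lower_rows_general n
end
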